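/- Let v : [t₁,t₂] → ℝ be absolutely continuous with v(t) > 0 for all t, and let ψ : (0,∞) → (0,∞) be measurable with 1/ψ locally integrable on (0,∞). If g ∈ L¹([t₁,t₂]) is nonnegative and |v'(t)| ≤ ψ(v(t)) g(t) for a.e. t, then ∫_{v(t₁)}^{v(t₂)} ds/ψ(s) ≤ ∫_{t₁}^{t₂} g(t) dt (when v(t₁) ≤ v(t₂)). -/

import Mathlib

/-! For continuous `h` the primitive `G y = ∫ h` is `C¹`, hence Lipschitz on compacts, so `G ∘ v`
is absolutely continuous and the fundamental theorem of calculus gives the change of variables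
`∫_{v a}^{v b} h = ∫_a^b h(v) v'`. Thus Lebesgue measure on `[v a, v b]` is dominated by the
push-forward of `|v'| dt` under `v` when tested against bounded continuous functions, hence as a
measure, by inner regularity with respect to closed sets. Integrating `1/ψ` against this domination
and using `|v'| / ψ(v) ≤ g` gives the inequality. -/

open MeasureTheory Set Filter Topology
open scoped ENNReal NNReal BoundedContinuousFunction

theorem MeasureTheory.Measure.le_of_forall_lintegral_le {Ω : Type*} [MeasurableSpace Ω]
    [TopologicalSpace Ω] [HasOuterApproxClosed Ω] [OpensMeasurableSpace Ω] {μ ν : Measure Ω}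
    [IsFiniteMeasure μ] [IsFiniteMeasure ν] [μ.WeaklyRegular]
    (h : ∀ f : Ω →ᵇ ℝ≥0, ∫⁻ x, f x ∂μ ≤ ∫⁻ x, f x ∂ν) : μ ≤ ν := by
  have h_closed {F : Set Ω} (hF : IsClosed F) : μ F ≤ ν F :=
    le_of_tendsto_of_tendsto' (HasOuterApproxClosed.tendsto_lintegral_apprSeq hF μ)
      (HasOuterApproxClosed.tendsto_lintegral_apprSeq hF ν) fun _ => h _
  refine Measure.le_iff.2 fun A hA => ENNReal.le_of_forall_pos_le_add fun ε hε _ => ?_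
  obtain ⟨F, hFA, hF, hμF⟩ :=
    hA.exists_isClosed_lt_add (measure_ne_top μ A) (ENNReal.coe_ne_zero.2 hε.ne')
  calc μ A ≤ μ F + ε := hμF.le
    _ ≤ ν A + ε := add_le_add_left ((h_closed hF).trans (measure_mono hFA)) _

theorem AbsolutelyContinuousOnInterval.congr {X : Type*} [PseudoMetricSpace X] {f g : ℝ → X}
    {a b : ℝ} (hf : AbsolutelyContinuousOnInterval f a b) (hfg : EqOn f g (uIcc a b)) :
    AbsolutelyContinuousOnInterval g a b :=
  hf.congr' <| eventually_inf_principal.2 <| Eventually.of_forall fun _ hE =>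
    Finset.sum_congr rfl fun i hi => by rw [hfg (hE.1 i hi).1, hfg (hE.1 i hi).2]

theorem LipschitzOnWith.comp_absolutelyContinuousOnInterval {X Y : Type*} [PseudoMetricSpace X]
    [PseudoMetricSpace Y] {G : X → Y} {K : ℝ≥0} {s : Set X} {f : ℝ → X} {a b : ℝ}
    (hG : LipschitzOnWith K G s) (hf : AbsolutelyContinuousOnInterval f a b)
    (hfs : MapsTo f (uIcc a b) s) : AbsolutelyContinuousOnInterval (G ∘ f) a b := by
  unfold AbsolutelyContinuousOnInterval at hf ⊢
  have hKf := hf.const_mul (K : ℝ)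
  rw [mul_zero] at hKf
  refine squeeze_zero' (Eventually.of_forall fun _ => Finset.sum_nonneg fun _ _ => dist_nonneg)
    ?_ hKf
  refine eventually_inf_principal.2 (Eventually.of_forall fun E hE => ?_)
  rw [Finset.mul_sum]
  exact Finset.sum_le_sum fun i hi =>
    hG.dist_le_mul _ (hfs (hE.1 i hi).1) _ (hfs (hE.1 i hi).2)

namespace AbsolutelyContinuousOnInterval

variable {v : ℝ → ℝ} {a b : ℝ}

theorem integral_comp_mul_deriv {h : ℝ → ℝ}
    (hv : AbsolutelyContinuousOnInterval v a b) (hh : Continuous h) :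
    ∫ t in a..b, h (v t) * deriv v t = ∫ y in v a..v b, h y := by
  set G : ℝ → ℝ := fun y => ∫ z in v a..y, h z
  have hG (y : ℝ) : HasDerivAt G (h y) y := (hh.integral_hasStrictDerivAt _ _).hasDerivAt
  have hG_contDiff : ContDiff ℝ 1 G := by
    rw [contDiff_one_iff_deriv]
    refine ⟨fun y => (hG y).differentiableAt, ?_⟩
    rwa [show deriv G = h from funext fun y => (hG y).deriv]
  obtain ⟨R, hR⟩ := hv.exists_bound
  obtain ⟨K, hK⟩ := hG_contDiff.contDiffOn.exists_lipschitzOnWith one_ne_zero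
    (convex_closedBall 0 R) (isCompact_closedBall 0 R)
  have hGv : AbsolutelyContinuousOnInterval (G ∘ v) a b :=
    hK.comp_absolutelyContinuousOnInterval hv fun t ht => mem_closedBall_zero_iff.2 (hR t ht)
  have hderiv : ∀ᵐ t, t ∈ uIoc a b → deriv (G ∘ v) t = h (v t) * deriv v t := by
    filter_upwards [hv.ae_differentiableAt] with t ht ht'
    exact ((hG (v t)).comp t (ht (uIoc_subset_uIcc ht')).hasDerivAt).deriv
  rw [← intervalIntegral.integral_congr_ae hderiv, hGv.integral_deriv_eq_sub]
  simp [G]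

theorem lintegral_Icc_le_lintegral_comp_mul_enorm_deriv_of_continuous (hab : a ≤ b)
    (hv : AbsolutelyContinuousOnInterval v a b) {f : ℝ → ℝ≥0} (hf : Continuous f) :
    ∫⁻ y in Icc (v a) (v b), f y ≤ ∫⁻ t in Icc a b, f (v t) * ‖deriv v t‖ₑ := by
  rcases lt_or_ge (v b) (v a) with hvab | hvab
  · simp [Icc_eq_empty_of_lt hvab]
  have hf' : Continuous fun y => (f y : ℝ) := NNReal.continuous_coe.comp hf
  calc ∫⁻ y in Icc (v a) (v b), f y
      = ENNReal.ofReal (∫ y in v a..v b, (f y : ℝ)) := by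
        rw [lintegral_coe_eq_integral _ hf'.integrableOn_Icc,
          intervalIntegral.integral_of_le hvab, integral_Icc_eq_integral_Ioc]
    _ = ENNReal.ofReal (∫ t in Icc a b, (f (v t) : ℝ) * deriv v t) := by
        rw [← hv.integral_comp_mul_deriv hf', intervalIntegral.integral_of_le hab,
          integral_Icc_eq_integral_Ioc]
    _ ≤ ‖∫ t in Icc a b, (f (v t) : ℝ) * deriv v t‖ₑ := Real.ofReal_le_enorm _
    _ ≤ ∫⁻ t in Icc a b, ‖(f (v t) : ℝ) * deriv v t‖ₑ := enorm_integral_le_lintegral_enorm _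
    _ = ∫⁻ t in Icc a b, f (v t) * ‖deriv v t‖ₑ := by simp [enorm_mul]

theorem lintegral_Icc_le_lintegral_comp_mul_enorm_deriv (hab : a ≤ b)
    (hv : AbsolutelyContinuousOnInterval v a b) {F : ℝ → ℝ≥0∞} (hF : Measurable F) :
    ∫⁻ y in Icc (v a) (v b), F y ≤ ∫⁻ t in Icc a b, F (v t) * ‖deriv v t‖ₑ := by
  set ρ := (volume.restrict (Icc a b)).withDensity fun t => ‖deriv v t‖ₑ
  have hv_meas : AEMeasurable v (volume.restrict (Icc a b)) :=
    (uIcc_of_le hab ▸ hv.continuousOn).aemeasurable measurableSet_Icc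
  have hρ_fin : IsFiniteMeasure ρ := isFiniteMeasure_withDensity
    ((intervalIntegrable_iff_integrableOn_Icc_of_le hab).1 hv.intervalIntegrable_deriv).2.ne
  have hρ {G : ℝ → ℝ≥0∞} (hG : Measurable G) :
      ∫⁻ y, G y ∂ρ.map v = ∫⁻ t in Icc a b, G (v t) * ‖deriv v t‖ₑ := by
    rw [lintegral_map' hG.aemeasurable (hv_meas.mono_ac (withDensity_absolutelyContinuous _ _)),
      lintegral_withDensity_eq_lintegral_mul₀ (g := fun t => G (v t))
        (measurable_deriv v).enorm.aemeasurable (hG.comp_aemeasurable hv_meas)]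
    simp only [Pi.mul_apply, mul_comm]
  have hle : volume.restrict (Icc (v a) (v b)) ≤ ρ.map v :=
    Measure.le_of_forall_lintegral_le fun f =>
      (hρ f.continuous.measurable.coe_nnreal_ennreal).symm ▸
        hv.lintegral_Icc_le_lintegral_comp_mul_enorm_deriv_of_continuous hab f.continuous
  exact (lintegral_mono' hle le_rfl).trans_eq (hρ hF)

theorem integral_le_of_comp_mul_abs_deriv_le (hab : a ≤ b) (hvab : v a ≤ v b)
    (hv : AbsolutelyContinuousOnInterval v a b) {h G : ℝ → ℝ} (hh : Measurable h)
    (hh_nonneg : ∀ y ∈ Ioc (v a) (v b), 0 ≤ h y) (hG : IntegrableOn G (Icc a b))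
    (hG_nonneg : ∀ t ∈ Icc a b, 0 ≤ G t)
    (hbound : ∀ᵐ t ∂(volume.restrict (Icc a b)), h (v t) * |deriv v t| ≤ G t) :
    ∫ y in v a..v b, h y ≤ ∫ t in a..b, G t := by
  have hG_lintegral :
      ∫⁻ t in Icc a b, ENNReal.ofReal (G t) = ENNReal.ofReal (∫ t in a..b, G t) := by
    rw [← ofReal_integral_eq_lintegral_ofReal hG
        ((ae_restrict_mem measurableSet_Icc).mono hG_nonneg),
      intervalIntegral.integral_of_le hab, integral_Icc_eq_integral_Ioc]
  rw [intervalIntegral.integral_of_le hvab, integral_eq_lintegral_of_nonneg_ae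
      ((ae_restrict_mem measurableSet_Ioc).mono hh_nonneg) hh.aestronglyMeasurable,
    ← ENNReal.toReal_ofReal (intervalIntegral.integral_nonneg hab hG_nonneg), ← hG_lintegral]
  refine ENNReal.toReal_mono (hG_lintegral ▸ ENNReal.ofReal_ne_top) ?_
  calc ∫⁻ y in Ioc (v a) (v b), ENNReal.ofReal (h y)
      ≤ ∫⁻ y in Icc (v a) (v b), ENNReal.ofReal (h y) := lintegral_mono_set Ioc_subset_Icc_self
    _ ≤ ∫⁻ t in Icc a b, ENNReal.ofReal (h (v t)) * ‖deriv v t‖ₑ :=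
        hv.lintegral_Icc_le_lintegral_comp_mul_enorm_deriv hab hh.ennreal_ofReal
    _ ≤ ∫⁻ t in Icc a b, ENNReal.ofReal (G t) := by
        refine lintegral_mono_ae (hbound.mono fun t ht => ?_)
        rw [Real.enorm_eq_ofReal_abs, ← ENNReal.ofReal_mul' (abs_nonneg _)]
        exact ENNReal.ofReal_le_ofReal ht

end AbsolutelyContinuousOnInterval

section Primitive

variable {v v' : ℝ → ℝ} {a b : ℝ}

theorem absolutelyContinuousOnInterval_of_eq_add_integral (hab : a ≤ b)
    (hv' : IntegrableOn v' (Icc a b)) (hv : ∀ t ∈ Icc a b, v t = v a + ∫ s in a..t, v' s) :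
    AbsolutelyContinuousOnInterval v a b := by
  have hprim := ((intervalIntegrable_iff_integrableOn_Icc_of_le hab).2 hv')
    |>.absolutelyContinuousOnInterval_intervalIntegral left_mem_uIcc
  exact ((contDiffOn_const (c := v a)).absolutelyContinuousOnInterval.fun_add hprim).congr
    fun t ht => (hv t (uIcc_of_le hab ▸ ht)).symm

theorem deriv_ae_eq_of_eq_add_integral (hab : a ≤ b) (hv' : IntegrableOn v' (Icc a b))
    (hv : ∀ t ∈ Icc a b, v t = v a + ∫ s in a..t, v' s) :
    deriv v =ᵐ[volume.restrict (Icc a b)] v' := by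
  have hprim := ((intervalIntegrable_iff_integrableOn_Icc_of_le hab).2 hv').ae_hasDerivAt_integral
  rw [uIcc_of_le hab] at hprim
  rw [← restrict_Ioo_eq_restrict_Icc, EventuallyEq, ae_restrict_iff' measurableSet_Ioo]
  filter_upwards [hprim] with t ht htab
  have hv_near : (fun s => v a + ∫ r in a..s, v' r) =ᶠ[𝓝 t] v :=
    eventually_of_mem (Icc_mem_nhds htab.1 htab.2) fun s hs => (hv s hs).symm
  exact ((ht (Ioo_subset_Icc_self htab) a (left_mem_Icc.2 hab)).const_add _).congr_of_eventuallyEq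
    hv_near.symm |>.deriv

end Primitive

theorem bihari_change_of_variables_general (t₁ t₂ : ℝ) (ht : t₁ < t₂)
    (v v' : ℝ → ℝ)
    (hv' : IntegrableOn v' (Icc t₁ t₂))
    (hvAC : ∀ t ∈ Icc t₁ t₂, v t = v t₁ + ∫ s in t₁..t, v' s)
    (hvpos : ∀ t ∈ Icc t₁ t₂, 0 < v t)
    (ψ : ℝ → ℝ) (hψmeas : Measurable ψ) (hψpos : ∀ s > (0:ℝ), 0 < ψ s)
    (g : ℝ → ℝ) (hg : IntegrableOn g (Icc t₁ t₂))
    (hg0 : ∀ t ∈ Icc t₁ t₂, 0 ≤ g t)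
    (hgrowth : ∀ᵐ t ∂(volume.restrict (Icc t₁ t₂)), |v' t| ≤ ψ (v t) * g t)
    (hmono : v t₁ ≤ v t₂) :
    ∫ s in (v t₁)..(v t₂), 1 / ψ s ≤ ∫ t in t₁..t₂, g t := by
  have hv := absolutelyContinuousOnInterval_of_eq_add_integral ht.le hv' hvAC
  refine hv.integral_le_of_comp_mul_abs_deriv_le ht.le hmono (measurable_const.div hψmeas)
    (fun s hs => (one_div_pos.2 (hψpos s ((hvpos t₁ (left_mem_Icc.2 ht.le)).trans hs.1))).le)
    hg hg0 ?_
  filter_upwards [deriv_ae_eq_of_eq_add_integral ht.le hv' hvAC, hgrowth,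
    ae_restrict_mem measurableSet_Icc] with t hderiv hgrowth_t ht_mem
  rwa [hderiv, one_div, inv_mul_le_iff₀ (hψpos _ (hvpos t ht_mem))]

/-- Bihari-type change-of-variables inequality: if `v` is absolutely continuous and
positive on `[t₁,t₂]`, `1/ψ` is locally integrable on `(0,∞)`, and
`|v'| ≤ ψ(v)·g` a.e. with `g ∈ L¹` nonnegative, then
`∫_{v(t₁)}^{v(t₂)} ds/ψ(s) ≤ ∫_{t₁}^{t₂} g`. -/
theorem bihari_change_of_variables (t₁ t₂ : ℝ) (ht : t₁ < t₂)
    (v v' : ℝ → ℝ)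
    (hv' : IntegrableOn v' (Icc t₁ t₂))
    (hvAC : ∀ t ∈ Icc t₁ t₂, v t = v t₁ + ∫ s in t₁..t, v' s)
    (hvpos : ∀ t ∈ Icc t₁ t₂, 0 < v t)
    (ψ : ℝ → ℝ) (hψmeas : Measurable ψ) (hψpos : ∀ s > (0:ℝ), 0 < ψ s)
    (hψloc : ∀ c d : ℝ, 0 < c → c ≤ d → IntegrableOn (fun s => 1 / ψ s) (Icc c d))
    (g : ℝ → ℝ) (hg : IntegrableOn g (Icc t₁ t₂))
    (hg0 : ∀ t ∈ Icc t₁ t₂, 0 ≤ g t)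
    (hgrowth : ∀ᵐ t ∂(volume.restrict (Icc t₁ t₂)), |v' t| ≤ ψ (v t) * g t)
    (hmono : v t₁ ≤ v t₂) :
    ∫ s in (v t₁)..(v t₂), 1 / ψ s ≤ ∫ t in t₁..t₂, g t :=
  bihari_change_of_variables_general t₁ t₂ ht v v' hv' hvAC hvpos ψ hψmeas hψpos g hg hg0 hgrowth
    hmono
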